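/- arXiv:2207.02525 — 5 statements merged into one kernel-verified Lean document; each statement's English description precedes it below -/
import Mathlib

section
/- For z, w in the open unit disc and λ on the unit circle, the power series identity (z-λ)(w̄-λ̄)/(1-z w̄)^{n+2} = (1/(n+1)!) [ Σ_{k≥0} (k+1)_n (2k+n+1) z^k w̄^k − Σ_{k≥0} (k+1)_{n+1} (λ z^k w̄^{k+1} + λ̄ z^{k+1} w̄^k) ] holds, where (α)_j denotes the Pochhammer symbol α(α+1)⋯(α+j-1). -/
open Metric Complex

/-- The Pochhammer symbol (rising factorial) `(α)_j = α(α+1)⋯(α+j-1)` for complex `α`. -/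
noncomputable def poch (α : ℂ) (j : ℕ) : ℂ := (ascPochhammer ℂ j).eval α

lemma poch_nat_succ (k m : ℕ) :
    poch ((k : ℂ) + 1) m = (m.factorial : ℂ) * ((k + m).choose m : ℂ) := by
  have h1 : ((k : ℂ) + 1) = ((k + 1 : ℕ) : ℂ) := by push_cast; ring
  rw [poch, h1, ← ascPochhammer_eval_cast, ascPochhammer_nat_eq_ascFactorial,
    Nat.ascFactorial_eq_factorial_mul_choose]
  push_cast; ring

lemma poch_succ_left (x : ℂ) (m : ℕ) : poch x (m + 1) = x * poch (x + 1) m := by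
  rw [poch, poch, ascPochhammer_succ_left, Polynomial.eval_mul, Polynomial.eval_X,
    Polynomial.eval_comp, Polynomial.eval_add, Polynomial.eval_X, Polynomial.eval_one]

lemma hasSum_poch (m : ℕ) {u : ℂ} (hu : ‖u‖ < 1) :
    HasSum (fun k : ℕ => poch ((k : ℂ) + 1) m * u ^ k)
      ((m.factorial : ℂ) / (1 - u) ^ (m + 1)) := by
  have h := (hasSum_choose_mul_geometric_of_norm_lt_one m hu).mul_left (m.factorial : ℂ)
  have heq : (fun k : ℕ => poch ((k : ℂ) + 1) m * u ^ k)
      = fun k : ℕ => (m.factorial : ℂ) * (((k + m).choose m : ℂ) * u ^ k) := by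
    funext k; rw [poch_nat_succ]; ring
  rw [heq, show (m.factorial : ℂ) / (1 - u) ^ (m + 1)
      = (m.factorial : ℂ) * (1 / (1 - u) ^ (m + 1)) by ring]
  exact h

theorem stmt4 (n : ℕ) (hn : 1 ≤ n) (lam : ℂ) (hlam : ‖lam‖ = 1)
    (z w : ℂ) (hz : z ∈ ball (0:ℂ) 1) (hw : w ∈ ball (0:ℂ) 1) :
    (z - lam) * ((starRingEnd ℂ) w - (starRingEnd ℂ) lam) /
        (1 - z * (starRingEnd ℂ) w) ^ (n+2)
      = (((n+1).factorial : ℂ))⁻¹ *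
        ((∑' k : ℕ, poch ((k : ℂ) + 1) n * ((2 * (k : ℂ) + (n : ℂ) + 1)) *
            z ^ k * ((starRingEnd ℂ) w) ^ k)
         - (∑' k : ℕ, poch ((k : ℂ) + 1) (n+1) *
            (lam * z ^ k * ((starRingEnd ℂ) w) ^ (k+1) +
             (starRingEnd ℂ) lam * z ^ (k+1) * ((starRingEnd ℂ) w) ^ k))) := by
  set c := (starRingEnd ℂ) w with hc
  set u := z * c with hu_def
  have hz1 : ‖z‖ < 1 := by simpa using hz
  have hw1 : ‖c‖ < 1 := by simpa [hc] using hw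
  have hu : ‖u‖ < 1 := by
    calc ‖u‖ = ‖z‖ * ‖c‖ := norm_mul _ _
    _ < 1 := by nlinarith [norm_nonneg z, norm_nonneg c]
  have hne : (1 - u) ≠ 0 := by
    intro h
    have h1 : (1:ℂ) = u := by linear_combination h
    rw [← h1] at hu; simp at hu
  have hlam1 : lam * (starRingEnd ℂ) lam = 1 := by
    have hns : Complex.normSq lam = 1 := by
      rw [Complex.normSq_eq_norm_sq, hlam]; norm_num
    rw [Complex.mul_conj, hns]; norm_num
  set T := ((n+1).factorial : ℂ) / (1 - u) ^ (n + 2) with hT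
  have h1 : HasSum (fun k : ℕ => poch ((k : ℂ) + 1) (n+1) * u ^ k) T := hasSum_poch (n+1) hu
  have hzero : poch ((0:ℕ) : ℂ) (n+1) * u ^ (0:ℕ) = 0 := by
    simp [poch, ascPochhammer_ne_zero_eval_zero (S := ℂ) (Nat.succ_ne_zero n)]
  have h2 : HasSum (fun k : ℕ => poch ((k : ℂ)) (n+1) * u ^ k) (T * u) := by
    have h := h1.mul_right u
    rw [← hasSum_nat_add_iff' 1]
    rw [Finset.sum_range_one, hzero, sub_zero]
    have heq : (fun k : ℕ => poch (((k + 1 : ℕ)) : ℂ) (n+1) * u ^ (k+1))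
        = fun k : ℕ => poch ((k : ℂ) + 1) (n+1) * u ^ k * u := by
      funext k; push_cast; rw [pow_succ]; ring
    rw [heq]; exact h
  have hS1 : HasSum (fun k : ℕ => poch ((k : ℂ) + 1) n * ((2 * (k : ℂ) + (n : ℂ) + 1)) *
      z ^ k * c ^ k) (T + T * u) := by
    have h := h1.add h2
    have heq : (fun k : ℕ => poch ((k : ℂ)+1) (n+1) * u ^ k + poch ((k : ℂ)) (n+1) * u ^ k)
        = fun k : ℕ => poch ((k : ℂ) + 1) n * ((2 * (k : ℂ) + (n : ℂ) + 1)) * z ^ k * c ^ k := by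
      funext k
      have e1 : poch ((k:ℂ)+1) (n+1) = poch ((k:ℂ)+1) n * (((k:ℂ)+1) + n) := by
        rw [poch, poch, ascPochhammer_succ_eval]
      have e2 : poch ((k:ℂ)) (n+1) = (k:ℂ) * poch ((k:ℂ)+1) n := poch_succ_left _ _
      rw [e1, e2, hu_def, mul_pow]; ring
    rw [← heq]; exact h
  have hS2 : HasSum (fun k : ℕ => poch ((k : ℂ) + 1) (n+1) *
      (lam * z ^ k * c ^ (k+1) + (starRingEnd ℂ) lam * z ^ (k+1) * c ^ k))
      (lam * c * T + (starRingEnd ℂ) lam * z * T) := by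
    have h := (h1.mul_left (lam * c)).add (h1.mul_left ((starRingEnd ℂ) lam * z))
    have heq : (fun k : ℕ => lam * c * (poch ((k:ℂ)+1) (n+1) * u ^ k)
        + (starRingEnd ℂ) lam * z * (poch ((k:ℂ)+1) (n+1) * u ^ k))
        = fun k : ℕ => poch ((k : ℂ) + 1) (n+1) *
          (lam * z ^ k * c ^ (k+1) + (starRingEnd ℂ) lam * z ^ (k+1) * c ^ k) := by
      funext k
      rw [hu_def, mul_pow, pow_succ, pow_succ]; ring
    rw [← heq]; exact h
  rw [hS1.tsum_eq, hS2.tsum_eq]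
  have key : (z - lam) * (c - (starRingEnd ℂ) lam)
      = 1 + u - lam * c - (starRingEnd ℂ) lam * z := by
    rw [hu_def]; linear_combination hlam1
  have hfac : ((n+1).factorial : ℂ) ≠ 0 := by
    exact_mod_cast Nat.cast_ne_zero.mpr (Nat.factorial_ne_zero (n+1))
  rw [key, hT]
  field_simp
  ring
end

section
/- Let λ ∈ 𝕋, n ∈ ℕ, and suppose f = α + (z-λ)g with α ∈ ℂ and g ∈ H². Then f(z) → α as z → λ within each oricyclic approach region {z ∈ 𝔻 : |z-λ| < κ(1-|z|²)^{1/2}} for any κ > 0; in particular the radial limit f*(λ) = lim_{r→1⁻} f(rλ) exists and equals α. -/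
open MeasureTheory Metric Complex Filter
open scoped ENNReal NNReal Topology

/-- Taylor coefficient of `f` at the origin. -/
noncomputable def coeff (f : ℂ → ℂ) (k : ℕ) : ℂ := iteratedDeriv k f 0 / (k.factorial : ℂ)

/-- `D_{σ,m}(f) = Σ_{k} C(k,m) |a_k|²`; for `m = 0` this is the squared `H²` norm. -/
noncomputable def Dsig (m : ℕ) (f : ℂ → ℂ) : ℝ≥0∞ :=
  ∑' k : ℕ, (k.choose m : ℝ≥0∞) * (‖coeff f k‖₊ : ℝ≥0∞) ^ 2

lemma hasSum_coeff (g : ℂ → ℂ) (hg : DifferentiableOn ℂ g (ball (0:ℂ) 1)) {z : ℂ} (hz : ‖z‖ < 1) :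
    HasSum (fun k => coeff g k * z ^ k) (g z) := by
  set r : ℝ≥0 := ⟨(‖z‖ + 1) / 2, by positivity⟩ with hr
  have hrc : (r : ℝ) = (‖z‖ + 1) / 2 := rfl
  have hzr : ‖z‖ < (r : ℝ) := by rw [hrc]; linarith
  have hr1 : (r : ℝ) < 1 := by rw [hrc]; linarith
  have hr0 : 0 < r := by
    rw [← NNReal.coe_lt_coe]
    exact lt_of_le_of_lt (norm_nonneg z) hzr
  have hsub : closedBall (0:ℂ) r ⊆ ball (0:ℂ) 1 := by
    intro w hw
    simp only [mem_closedBall, mem_ball, dist_zero_right] at hw ⊢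
    exact lt_of_le_of_lt hw hr1
  have h := (hg.mono hsub).hasFPowerSeriesOnBall hr0
  set p := cauchyPowerSeries g 0 r with hp
  have hcoeff : ∀ k, coeff g k = p.coeff k := by
    intro k
    have h1 := h.factorial_smul (1 : ℂ) k
    have h2 : iteratedDeriv k g 0 = iteratedFDeriv ℂ k g 0 (fun _ => 1) := by
      rw [iteratedDeriv_eq_iteratedFDeriv]
    unfold coeff
    rw [h2, ← h1, FormalMultilinearSeries.coeff]
    rw [nsmul_eq_mul]
    field_simp [Nat.factorial_ne_zero]
    rfl
  have hzball : z ∈ Metric.eball (0:ℂ) (r : ℝ≥0∞) := by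
    rw [Metric.mem_eball, edist_zero_right]
    exact_mod_cast (by rwa [← NNReal.coe_lt_coe, coe_nnnorm] : ‖z‖₊ < r)
  have hs := h.hasSum hzball
  simp only [zero_add] at hs
  have heq : (fun n => p n fun _ => z) = fun k => coeff g k * z ^ k := by
    funext k
    rw [p.apply_eq_pow_smul_coeff, smul_eq_mul, hcoeff k]
    ring
  rwa [heq] at hs

lemma tsum_CS (u v : ℕ → ℝ) (hu0 : ∀ n, 0 ≤ u n) (hv0 : ∀ n, 0 ≤ v n)
    (hu : Summable (fun n => u n ^ 2)) (hv : Summable (fun n => v n ^ 2)) :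
    (Summable fun n => u n * v n) ∧
    ∑' n, u n * v n ≤ Real.sqrt (∑' n, u n ^ 2) * Real.sqrt (∑' n, v n ^ 2) := by
  have hsum : Summable fun n => u n * v n := by
    refine Summable.of_nonneg_of_le (fun n => mul_nonneg (hu0 n) (hv0 n)) (fun n => ?_)
      (((hu.add hv).mul_left (1/2)))
    have := sq_nonneg (u n - v n)
    nlinarith
  refine ⟨hsum, Summable.tsum_le_of_sum_le hsum fun s => ?_⟩
  have h1 := Finset.sum_mul_sq_le_sq_mul_sq s u v
  have hsnn : 0 ≤ ∑ i ∈ s, u i ^ 2 := Finset.sum_nonneg fun i _ => sq_nonneg _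
  have hsnn' : 0 ≤ ∑ i ∈ s, v i ^ 2 := Finset.sum_nonneg fun i _ => sq_nonneg _
  have h2 : ∑ i ∈ s, u i * v i ≤ Real.sqrt ((∑ i ∈ s, u i ^ 2) * ∑ i ∈ s, v i ^ 2) := by
    rw [← Real.sqrt_sq (Finset.sum_nonneg fun i _ => mul_nonneg (hu0 i) (hv0 i))]
    exact Real.sqrt_le_sqrt h1
  rw [Real.sqrt_mul hsnn] at h2
  refine h2.trans (mul_le_mul (Real.sqrt_le_sqrt ?_) (Real.sqrt_le_sqrt ?_)
    (Real.sqrt_nonneg _) (Real.sqrt_nonneg _))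
  · exact Summable.sum_le_tsum s (fun i _ => sq_nonneg _) hu
  · exact Summable.sum_le_tsum s (fun i _ => sq_nonneg _) hv

set_option maxHeartbeats 2000000 in
lemma key_decay (g : ℂ → ℂ) (hg : DifferentiableOn ℂ g (ball (0:ℂ) 1))
    (hsq : Summable fun k => ‖coeff g k‖ ^ 2) :
    ∀ ε : ℝ, 0 < ε → ∃ δ : ℝ, 0 < δ ∧ ∀ z : ℂ, ‖z‖ < 1 → 1 - δ < ‖z‖ →
      Real.sqrt (1 - ‖z‖ ^ 2) * ‖g z‖ ≤ ε := by
  intro ε hε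
  have htail := tendsto_sum_nat_add (fun k => ‖coeff g k‖ ^ 2)
  have hev : ∀ᶠ N in atTop, ∑' k : ℕ, ‖coeff g (k + N)‖ ^ 2 < (ε / 2) ^ 2 := by
    have := htail.eventually (eventually_lt_nhds (by positivity : (0:ℝ) < (ε/2)^2))
    exact this
  obtain ⟨N, hN⟩ := hev.exists
  set M : ℝ := ∑ k ∈ Finset.range N, ‖coeff g k‖ with hM
  have hM0 : 0 ≤ M := Finset.sum_nonneg fun i _ => norm_nonneg _
  have hM1 : (0:ℝ) < M + 1 := by linarith
  have hεM : 0 < ε / (2 * (M + 1)) := div_pos hε (by linarith)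
  refine ⟨min 1 ((ε / (2 * (M + 1))) ^ 2 / 2),
    lt_min one_pos (div_pos (pow_pos hεM 2) two_pos), fun z hz1 hzδ => ?_⟩
  have hz0 : 0 ≤ ‖z‖ := norm_nonneg z
  have hs1 : 0 < 1 - ‖z‖ ^ 2 := by nlinarith
  have hδ2 : 1 - ‖z‖ < (ε / (2 * (M + 1))) ^ 2 / 2 :=
    lt_of_lt_of_le (by linarith [min_le_right 1 ((ε / (2 * (M + 1))) ^ 2 / 2)]) le_rfl
  have hsqrt_small : Real.sqrt (1 - ‖z‖ ^ 2) ≤ ε / (2 * (M + 1)) := by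
    have h1 : 1 - ‖z‖ ^ 2 ≤ 2 * (1 - ‖z‖) := by nlinarith
    have h2 : (1 - ‖z‖ ^ 2) ≤ (ε / (2 * (M + 1))) ^ 2 := by nlinarith
    calc Real.sqrt (1 - ‖z‖ ^ 2) ≤ Real.sqrt ((ε / (2 * (M + 1))) ^ 2) := Real.sqrt_le_sqrt h2
    _ = ε / (2 * (M + 1)) := Real.sqrt_sq hεM.le
  set P : ℂ := ∑ k ∈ Finset.range N, coeff g k * z ^ k with hP
  have hPle : ‖P‖ ≤ M := by
    calc ‖P‖ ≤ ∑ k ∈ Finset.range N, ‖coeff g k * z ^ k‖ := norm_sum_le _ _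
    _ ≤ ∑ k ∈ Finset.range N, ‖coeff g k‖ := by
        refine Finset.sum_le_sum fun k _ => ?_
        rw [norm_mul, norm_pow]
        calc ‖coeff g k‖ * ‖z‖ ^ k ≤ ‖coeff g k‖ * 1 := by
              refine mul_le_mul_of_nonneg_left ?_ (norm_nonneg _)
              exact pow_le_one₀ hz0 hz1.le
        _ = ‖coeff g k‖ := mul_one _
  have hhs := hasSum_coeff g hg hz1
  have htailsum : HasSum (fun n => coeff g (n + N) * z ^ (n + N)) (g z - P) :=
    (hasSum_nat_add_iff' (f := fun k => coeff g k * z ^ k) N).2 hhs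
  set u : ℕ → ℝ := fun n => ‖coeff g (n + N)‖ with hu
  set v : ℕ → ℝ := fun n => ‖z‖ ^ (n + N) with hv
  have husq : Summable fun n => u n ^ 2 :=
    (summable_nat_add_iff (f := fun k => ‖coeff g k‖ ^ 2) N).2 hsq
  have hvsq : Summable fun n => v n ^ 2 := by
    have : Summable fun n : ℕ => (‖z‖ ^ 2) ^ n := by
      apply summable_geometric_of_lt_one (by positivity)
      nlinarith
    refine this.of_nonneg_of_le (fun n => by positivity) fun n => ?_
    simp only [hv, ← pow_mul]
    exact pow_le_pow_of_le_one (by positivity) (by nlinarith) (by omega)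
  obtain ⟨hsumuv, hCS⟩ := tsum_CS u v (fun n => norm_nonneg _) (fun n => by positivity) husq hvsq
  have hnorm_tail : ‖g z - P‖ ≤ ∑' n, u n * v n := by
    have h1 : ‖g z - P‖ = ‖∑' n, coeff g (n + N) * z ^ (n + N)‖ := by
      rw [htailsum.tsum_eq]
    rw [h1]
    refine (norm_tsum_le_tsum_norm ?_).trans ?_
    · refine hsumuv.congr fun n => ?_
      simp [hu, hv, norm_mul, norm_pow]
    · refine le_of_eq (tsum_congr fun n => ?_)
      simp [hu, hv, norm_mul, norm_pow]
  have hvtsum : ∑' n, v n ^ 2 ≤ (1 - ‖z‖ ^ 2)⁻¹ := by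
    have hgeo : ∑' n : ℕ, (‖z‖ ^ 2) ^ n = (1 - ‖z‖ ^ 2)⁻¹ :=
      tsum_geometric_of_lt_one (by positivity) (by nlinarith)
    rw [← hgeo]
    refine Summable.tsum_le_tsum (fun n => ?_) hvsq
      (summable_geometric_of_lt_one (by positivity) (by nlinarith))
    simp only [hv]
    rw [← pow_mul, ← pow_mul]
    exact pow_le_pow_of_le_one (by positivity) (by nlinarith) (by omega)
  have hutsum : ∑' n, u n ^ 2 < (ε / 2) ^ 2 := hN
  have htail_bound : ‖g z - P‖ ≤ (ε / 2) * Real.sqrt ((1 - ‖z‖ ^ 2)⁻¹) := by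
    refine hnorm_tail.trans (hCS.trans ?_)
    refine mul_le_mul ?_ (Real.sqrt_le_sqrt hvtsum) (Real.sqrt_nonneg _) (by positivity)
    calc Real.sqrt (∑' n, u n ^ 2) ≤ Real.sqrt ((ε / 2) ^ 2) := Real.sqrt_le_sqrt hutsum.le
    _ = ε / 2 := Real.sqrt_sq (by positivity)
  have hsqrt_mul : Real.sqrt (1 - ‖z‖ ^ 2) * Real.sqrt ((1 - ‖z‖ ^ 2)⁻¹) = 1 := by
    rw [← Real.sqrt_mul hs1.le, mul_inv_cancel₀ hs1.ne', Real.sqrt_one]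
  have hgz : ‖g z‖ ≤ ‖P‖ + ‖g z - P‖ := by
    have : g z = P + (g z - P) := by ring
    calc ‖g z‖ = ‖P + (g z - P)‖ := by rw [← this]
    _ ≤ ‖P‖ + ‖g z - P‖ := norm_add_le _ _
  have hsq0 : 0 ≤ Real.sqrt (1 - ‖z‖ ^ 2) := Real.sqrt_nonneg _
  calc Real.sqrt (1 - ‖z‖ ^ 2) * ‖g z‖
      ≤ Real.sqrt (1 - ‖z‖ ^ 2) * (‖P‖ + ‖g z - P‖) := mul_le_mul_of_nonneg_left hgz hsq0
    _ = Real.sqrt (1 - ‖z‖ ^ 2) * ‖P‖ + Real.sqrt (1 - ‖z‖ ^ 2) * ‖g z - P‖ := by ring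
    _ ≤ (ε / (2 * (M + 1))) * M + Real.sqrt (1 - ‖z‖ ^ 2) * ((ε / 2) * Real.sqrt ((1 - ‖z‖ ^ 2)⁻¹)) := by
        gcongr
    _ = (ε / (2 * (M + 1))) * M + (ε / 2) * (Real.sqrt (1 - ‖z‖ ^ 2) * Real.sqrt ((1 - ‖z‖ ^ 2)⁻¹)) := by ring
    _ = (ε / (2 * (M + 1))) * M + ε / 2 := by rw [hsqrt_mul, mul_one]
    _ ≤ ε / 2 + ε / 2 := by
        have : (ε / (2 * (M + 1))) * M ≤ ε / 2 := by
          rw [div_mul_eq_mul_div, div_le_div_iff₀ (by linarith) (by norm_num : (0:ℝ) < 2)]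
          nlinarith
        linarith
    _ = ε := by ring

theorem stmt6 (lam : ℂ) (hlam : lam ∈ sphere (0:ℂ) 1) (α : ℂ) (f g : ℂ → ℂ)
    (hg : DifferentiableOn ℂ g (ball (0:ℂ) 1))
    (hgH2 : Dsig 0 g < ⊤)
    (hf : ∀ z ∈ ball (0:ℂ) 1, f z = α + (z - lam) * g z) :
    (∀ κ : ℝ, 0 < κ →
      Tendsto f
        (𝓝[{z : ℂ | z ∈ ball (0:ℂ) 1 ∧ ‖z - lam‖ < κ * Real.sqrt (1 - ‖z‖^2)}] lam)
        (𝓝 α)) ∧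
    Tendsto (fun r : ℝ => f ((r : ℂ) * lam)) (𝓝[<] (1 : ℝ)) (𝓝 α) := by
  have hlam1 : ‖lam‖ = 1 := by rwa [mem_sphere_zero_iff_norm] at hlam
  have hsq : Summable fun k => ‖coeff g k‖ ^ 2 := by
    have h0 : Dsig 0 g = ∑' k : ℕ, ((‖coeff g k‖₊ ^ 2 : ℝ≥0) : ℝ≥0∞) := by
      unfold Dsig
      refine tsum_congr fun k => ?_
      simp
    have h1 : (∑' k : ℕ, ((‖coeff g k‖₊ ^ 2 : ℝ≥0) : ℝ≥0∞)) ≠ ⊤ := by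
      rw [← h0]; exact hgH2.ne
    have h2 := ENNReal.tsum_coe_ne_top_iff_summable.1 h1
    have h3 := NNReal.summable_coe.2 h2
    refine h3.congr fun k => ?_
    push_cast
    rfl
  have key := key_decay g hg hsq
  have part1 : ∀ κ : ℝ, 0 < κ →
      Tendsto f
        (𝓝[{z : ℂ | z ∈ ball (0:ℂ) 1 ∧ ‖z - lam‖ < κ * Real.sqrt (1 - ‖z‖^2)}] lam)
        (𝓝 α) := by
    intro κ hκ
    set S := {z : ℂ | z ∈ ball (0:ℂ) 1 ∧ ‖z - lam‖ < κ * Real.sqrt (1 - ‖z‖^2)} with hS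
    have h0 : Tendsto (fun z => (z - lam) * g z) (𝓝[S] lam) (𝓝 0) := by
      rw [NormedAddCommGroup.tendsto_nhds_zero]
      intro ε hε
      obtain ⟨δ, hδ0, hkey⟩ := key (ε / (2 * κ)) (by positivity)
      have hnorm : Tendsto (fun z : ℂ => ‖z‖) (𝓝[S] lam) (𝓝 1) := by
        have h := (continuous_norm.tendsto lam).mono_left (nhdsWithin_le_nhds (s := S))
        rwa [hlam1] at h
      filter_upwards [self_mem_nhdsWithin,
        hnorm.eventually (eventually_gt_nhds (by linarith : 1 - δ < 1))] with z hzS hzδ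
      obtain ⟨hzb, hzo⟩ := hzS
      rw [mem_ball, dist_zero_right] at hzb
      have hk := hkey z hzb hzδ
      have hle : ‖(z - lam) * g z‖ ≤ κ * (ε / (2 * κ)) := by
        rw [norm_mul]
        calc ‖z - lam‖ * ‖g z‖ ≤ (κ * Real.sqrt (1 - ‖z‖^2)) * ‖g z‖ :=
              mul_le_mul_of_nonneg_right hzo.le (norm_nonneg _)
        _ = κ * (Real.sqrt (1 - ‖z‖^2) * ‖g z‖) := by ring
        _ ≤ κ * (ε / (2 * κ)) := mul_le_mul_of_nonneg_left hk hκ.le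
      have h2 : κ * (ε / (2 * κ)) < ε := by
        rw [show κ * (ε / (2 * κ)) = ε / 2 by field_simp]
        linarith
      exact lt_of_le_of_lt hle h2
    have heq : (fun z => α + (z - lam) * g z) =ᶠ[𝓝[S] lam] f := by
      filter_upwards [self_mem_nhdsWithin] with z hz
      exact (hf z hz.1).symm
    have hfin := Tendsto.congr' heq ((tendsto_const_nhds (x := α)).add h0)
    simpa using hfin
  refine ⟨part1, ?_⟩
  have hmap : Tendsto (fun r : ℝ => (r:ℂ) * lam) (𝓝[<] (1:ℝ))
      (𝓝[{z : ℂ | z ∈ ball (0:ℂ) 1 ∧ ‖z - lam‖ < 1 * Real.sqrt (1 - ‖z‖^2)}] lam) := by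
    rw [tendsto_nhdsWithin_iff]
    constructor
    · have hcont : Tendsto (fun r : ℝ => (r:ℂ) * lam) (𝓝 (1:ℝ)) (𝓝 ((1:ℝ) * lam)) :=
        ((Complex.continuous_ofReal.mul continuous_const).tendsto 1)
      have := hcont.mono_left (nhdsWithin_le_nhds (s := Set.Iio (1:ℝ)))
      simpa using this
    · have hIoo : Set.Ioo (0:ℝ) 1 ∈ 𝓝[<] (1:ℝ) :=
        Ioo_mem_nhdsLT_of_mem (by constructor <;> norm_num)
      filter_upwards [hIoo] with r hr
      obtain ⟨hr0, hr1⟩ := hr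
      have hnorm : ‖(r:ℂ) * lam‖ = r := by
        rw [norm_mul, Complex.norm_real, hlam1, mul_one, Real.norm_eq_abs, abs_of_pos hr0]
      constructor
      · rw [mem_ball, dist_zero_right, hnorm]; exact hr1
      · have hsub : (r:ℂ) * lam - lam = ((r - 1 : ℝ) : ℂ) * lam := by
          push_cast; ring
        rw [hsub, norm_mul, Complex.norm_real, hlam1, mul_one, Real.norm_eq_abs, abs_of_neg (by linarith : r - 1 < 0), hnorm]
        have : -(r - 1) = 1 - r := by ring
        rw [this, one_mul]
        rw [show (1:ℝ) - r^2 = (1-r)*(1+r) by ring]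
        have h1 : (1 - r)^2 < (1 - r) * (1 + r) := by nlinarith
        have h2 : 0 ≤ 1 - r := by linarith
        calc 1 - r = Real.sqrt ((1-r)^2) := (Real.sqrt_sq h2).symm
        _ < Real.sqrt ((1-r)*(1+r)) := by
            apply Real.sqrt_lt_sqrt (by positivity) h1
  exact (part1 1 one_pos).comp hmap
end

section
/- Let H be a semi-inner product space of holomorphic functions on 𝔻, closed under multiplication by z, such that ‖z f‖ ≥ ‖f‖ for all f ∈ H. Then for any λ with |λ| = 1, any 0 ≤ r < 1, and any f ∈ H, one has ‖(z-λ)f‖ ≤ (2/(1+r)) ‖(z-rλ)f‖. -/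
open Metric Complex

/-! With `A = ‖zf‖²`, `B = ‖f‖²`, `C = Re ⟨zf, λf⟩` one has `‖(z - μλ) f‖² = A - 2μC + μ²B`
for real `μ`, and
`4 (A - 2rC + r²B) - (1 + r)² (A - 2C + B) = (1 - r)² ‖zf + λf‖² + 2 (1 - r²) (‖zf‖² - ‖f‖²)`,
which is nonnegative by expansivity. -/

structure IsSemiInnerProductOn {V : Type*} [AddCommGroup V] [Module ℂ V]
    (H : Submodule ℂ V) (ip : V → V → ℂ) : Prop where
  add_left : ∀ f g h, f ∈ H → g ∈ H → h ∈ H → ip (f + g) h = ip f h + ip g h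
  smul_left : ∀ (c : ℂ) f g, f ∈ H → g ∈ H → ip (c • f) g = c * ip f g
  conj_symm : ∀ f g, f ∈ H → g ∈ H → ip f g = (starRingEnd ℂ) (ip g f)
  re_self_nonneg : ∀ f ∈ H, 0 ≤ (ip f f).re

namespace IsSemiInnerProductOn

variable {V : Type*} [AddCommGroup V] [Module ℂ V] {H : Submodule ℂ V} {ip : V → V → ℂ}

theorem re_add_smul_self (hip : IsSemiInnerProductOn H ip) {f g : V} (hf : f ∈ H)
    (hg : g ∈ H) (c : ℂ) :
    (ip (g + c • f) (g + c • f)).re =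
      (ip g g).re + 2 * (c * (starRingEnd ℂ) (ip g f)).re + normSq c * (ip f f).re := by
  have hcf : c • f ∈ H := H.smul_mem c hf
  have hsum : g + c • f ∈ H := H.add_mem hg hcf
  have hleft : ∀ h ∈ H, ip (g + c • f) h = ip g h + c * ip f h := fun h hh => by
    rw [hip.add_left g (c • f) h hg hcf hh, hip.smul_left c f h hf hh]
  have hexpand : ip (g + c • f) (g + c • f) =
      ip g g + ((starRingEnd ℂ) (c * (starRingEnd ℂ) (ip g f)) + c * (starRingEnd ℂ) (ip g f))
        + (c * (starRingEnd ℂ) c) * ip f f := by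
    rw [hleft _ hsum, hip.conj_symm g _ hg hsum, hip.conj_symm f _ hf hsum, hleft g hg,
      hleft f hf, hip.conj_symm f g hf hg]
    simp only [map_add, map_mul, conj_conj, ← hip.conj_symm g g hg hg,
      ← hip.conj_symm f f hf hf]
    ring
  rw [hexpand, mul_conj, add_re, add_re, add_re, conj_re, re_ofReal_mul]
  ring

end IsSemiInnerProductOn

theorem IsSemiInnerProductOn.re_sub_mul_self {H : Submodule ℂ (ℂ → ℂ)}
    {ip : (ℂ → ℂ) → (ℂ → ℂ) → ℂ} (hip : IsSemiInnerProductOn H ip) {f : ℂ → ℂ} (hf : f ∈ H)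
    (hzf : (fun z => z * f z) ∈ H) (μ : ℂ) :
    (ip (fun z => (z - μ) * f z) (fun z => (z - μ) * f z)).re =
      (ip (fun z => z * f z) (fun z => z * f z)).re
        - 2 * (μ * (starRingEnd ℂ) (ip (fun z => z * f z) f)).re + normSq μ * (ip f f).re := by
  have hfun : (fun z => (z - μ) * f z) = (fun z => z * f z) + (-μ) • f := by
    funext z
    simp only [Pi.add_apply, Pi.smul_apply, smul_eq_mul]
    ring
  rw [hfun, hip.re_add_smul_self hf hzf, neg_mul, neg_re, normSq_neg]
  ring

theorem one_add_sq_mul_le_four_mul {A B C r : ℝ} (hBA : B ≤ A) (hsum : 0 ≤ A + 2 * C + B)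
    (hr0 : -1 ≤ r) (hr1 : r ≤ 1) :
    (1 + r) ^ 2 * (A - 2 * C + B) ≤ 4 * (A - 2 * r * C + r ^ 2 * B) := by
  have hid : 4 * (A - 2 * r * C + r ^ 2 * B) - (1 + r) ^ 2 * (A - 2 * C + B) =
      (1 - r) ^ 2 * (A + 2 * C + B) + 2 * ((1 - r) * (1 + r)) * (A - B) := by ring
  have hr : 0 ≤ (1 - r) * (1 + r) := mul_nonneg (by linarith) (by linarith)
  have hAB : 0 ≤ A - B := sub_nonneg.2 hBA
  rw [← sub_nonneg, hid]
  positivity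

theorem Real.sqrt_le_div_mul_sqrt {x y a b : ℝ} (ha : 0 < a) (hb : 0 ≤ b)
    (h : a ^ 2 * x ≤ b ^ 2 * y) : √x ≤ b / a * √y := by
  calc √x ≤ √((b / a) ^ 2 * y) := by
        apply Real.sqrt_le_sqrt
        rw [div_pow, div_mul_eq_mul_div, le_div_iff₀ (by positivity)]
        linarith
    _ = b / a * √y := by rw [Real.sqrt_mul (sq_nonneg _), Real.sqrt_sq (by positivity)]

theorem stmt7_general (H : Submodule ℂ (ℂ → ℂ))
    (ip : (ℂ → ℂ) → (ℂ → ℂ) → ℂ)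
    -- semi-inner product axioms on H
    (hadd : ∀ f g h, f ∈ H → g ∈ H → h ∈ H → ip (f + g) h = ip f h + ip g h)
    (hsmul : ∀ (c : ℂ) f g, f ∈ H → g ∈ H → ip (c • f) g = c * ip f g)
    (hsymm : ∀ f g, f ∈ H → g ∈ H → ip f g = (starRingEnd ℂ) (ip g f))
    (hpos : ∀ f ∈ H, 0 ≤ (ip f f).re)
    -- H is closed under multiplication by z
    (hz : ∀ f ∈ H, (fun z => z * f z) ∈ H)
    -- expansivity: ‖zf‖ ≥ ‖f‖
    (hexp : ∀ f ∈ H,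
      Real.sqrt (ip f f).re ≤
        Real.sqrt (ip (fun z => z * f z) (fun z => z * f z)).re)
    (lam : ℂ) (hlam : ‖lam‖ = 1) (r : ℝ) (hr0 : 0 ≤ r) (hr1 : r < 1)
    (f : ℂ → ℂ) (hfH : f ∈ H) :
    Real.sqrt (ip (fun z => (z - lam) * f z) (fun z => (z - lam) * f z)).re ≤
      (2 / (1 + r)) *
        Real.sqrt (ip (fun z => (z - (r : ℂ) * lam) * f z)
          (fun z => (z - (r : ℂ) * lam) * f z)).re := by
  have hip : IsSemiInnerProductOn H ip := ⟨hadd, hsmul, hsymm, hpos⟩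
  have hzf := hz f hfH
  have hlam_normSq : normSq lam = 1 := by rw [normSq_eq_norm_sq, hlam, one_pow]
  have hBA := (Real.sqrt_le_sqrt_iff (hpos _ hzf)).1 (hexp f hfH)
  have hsum := hip.re_self_nonneg _ (H.add_mem hzf (H.smul_mem lam hfH))
  rw [hip.re_add_smul_self hfH hzf, hlam_normSq, one_mul] at hsum
  rw [hip.re_sub_mul_self hfH hzf, hip.re_sub_mul_self hfH hzf, hlam_normSq, mul_assoc,
    re_ofReal_mul, normSq_mul, normSq_ofReal, hlam_normSq]
  refine Real.sqrt_le_div_mul_sqrt (by linarith) zero_le_two ?_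
  convert one_add_sq_mul_le_four_mul hBA hsum (by linarith) hr1.le using 1 <;> ring

theorem stmt7 (H : Submodule ℂ (ℂ → ℂ))
    (hhol : ∀ f ∈ H, DifferentiableOn ℂ f (ball (0:ℂ) 1))
    (ip : (ℂ → ℂ) → (ℂ → ℂ) → ℂ)
    -- semi-inner product axioms on H
    (hadd : ∀ f g h, f ∈ H → g ∈ H → h ∈ H → ip (f + g) h = ip f h + ip g h)
    (hsmul : ∀ (c : ℂ) f g, f ∈ H → g ∈ H → ip (c • f) g = c * ip f g)
    (hsymm : ∀ f g, f ∈ H → g ∈ H → ip f g = (starRingEnd ℂ) (ip g f))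
    (hpos : ∀ f ∈ H, 0 ≤ (ip f f).re)
    -- H is closed under multiplication by z
    (hz : ∀ f ∈ H, (fun z => z * f z) ∈ H)
    -- expansivity: ‖zf‖ ≥ ‖f‖
    (hexp : ∀ f ∈ H,
      Real.sqrt (ip f f).re ≤
        Real.sqrt (ip (fun z => z * f z) (fun z => z * f z)).re)
    (lam : ℂ) (hlam : ‖lam‖ = 1) (r : ℝ) (hr0 : 0 ≤ r) (hr1 : r < 1)
    (f : ℂ → ℂ) (hfH : f ∈ H) :
    Real.sqrt (ip (fun z => (z - lam) * f z) (fun z => (z - lam) * f z)).re ≤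
      (2 / (1 + r)) *
        Real.sqrt (ip (fun z => (z - (r : ℂ) * lam) * f z)
          (fun z => (z - (r : ℂ) * lam) * f z)).re :=
  stmt7_general H ip hadd hsmul hsymm hpos hz hexp lam hlam r hr0 hr1 f hfH
end

section
/- For every integer n ≥ 1 and every real r with 0 < r < 1, the inequality 4^{n-1}(2-r) r^{2n} / (1+r)^{2n-2} ≤ 1 holds. -/
/-! Writing n = m + 1, the left side is `(2 - r) r² · (2r / (1 + r))^(2m)`; the first factor is at
most 1 on `[0, 1]`, and `2r ≤ 1 + r` makes the second one at most 1. -/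

theorem two_sub_mul_sq_le_one {R : Type*} [CommRing R] [LinearOrder R] [IsStrictOrderedRing R]
    {r : R} (h0 : 0 ≤ r) (h1 : r ≤ 1) : (2 - r) * r ^ 2 ≤ 1 := by
  -- 1 - (2 - r) r² = (1 - r)(1 + r(1 - r))
  nlinarith [mul_nonneg (sub_nonneg.2 h1) (mul_nonneg h0 (sub_nonneg.2 h1))]

theorem stmt8 (n : ℕ) (hn : 1 ≤ n) (r : ℝ) (hr0 : 0 < r) (hr1 : r < 1) :
    (4 : ℝ) ^ (n - 1) * (2 - r) * r ^ (2 * n) / (1 + r) ^ (2 * n - 2) ≤ 1 := by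
  obtain ⟨m, rfl⟩ := Nat.exists_eq_add_of_le' hn
  have hnum : (4 : ℝ) ^ (m + 1 - 1) * (2 - r) * r ^ (2 * (m + 1))
      = (2 - r) * r ^ 2 * (2 * r) ^ (2 * m) := by
    rw [Nat.add_sub_cancel, pow_mul, pow_mul, mul_pow, pow_succ]; ring
  rw [hnum, show 2 * (m + 1) - 2 = 2 * m by omega, div_le_one (by positivity)]
  calc (2 - r) * r ^ 2 * (2 * r) ^ (2 * m)
      ≤ (2 * r) ^ (2 * m) :=
        mul_le_of_le_one_left (by positivity) (two_sub_mul_sq_le_one hr0.le hr1.le)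
    _ ≤ (1 + r) ^ (2 * m) := pow_le_pow_left₀ (by positivity) (by linarith) _
end

section
/- Let A ⊆ O(𝔻) be a commutative Banach algebra with identity under pointwise operations in which the polynomials are dense and the spectrum of the coordinate function z equals the closed unit disc. Then every element of A extends continuously to the closed unit disc, the evaluation functional at each point of the closed disc is continuous on A, and for every f ∈ A the spectrum σ_A(f) equals f(closure of 𝔻). -/
open Metric Complex

theorem stmt16 (T : Type*) [NormedCommRing T] [NormedAlgebra ℂ T] [CompleteSpace T]
    -- A is realized as an algebra of holomorphic functions on 𝔻 via ι
    (ι : T →ₐ[ℂ] (ℂ → ℂ))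
    (hinj : ∀ a b : T, (∀ z ∈ ball (0:ℂ) 1, ι a z = ι b z) → a = b)
    (hhol : ∀ a : T, DifferentiableOn ℂ (ι a) (ball (0:ℂ) 1))
    -- the coordinate function z belongs to A
    (Z : T) (hZ : ∀ z ∈ ball (0:ℂ) 1, ι Z z = z)
    -- the polynomials are dense in A
    (hdense : DenseRange (fun p : Polynomial ℂ => (Polynomial.aeval Z p : T)))
    -- the spectrum of z in A is the closed unit disc
    (hspec : spectrum ℂ Z = closedBall (0:ℂ) 1) :
    ∃ E : T → (ℂ → ℂ),
      -- every element of A extends continuously to the closed unit disc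
      (∀ a : T, ContinuousOn (E a) (closedBall (0:ℂ) 1)) ∧
      (∀ a : T, ∀ z ∈ ball (0:ℂ) 1, E a z = ι a z) ∧
      -- evaluation at each point of the closed disc is continuous on A
      (∀ w ∈ closedBall (0:ℂ) 1, Continuous (fun a : T => E a w)) ∧
      -- the spectrum of every f ∈ A equals f(closure of 𝔻)
      (∀ a : T, spectrum ℂ a = E a '' (closedBall (0:ℂ) 1)) := by
  classical
  set K := WeakDual.characterSpace ℂ T
  -- the map φ ↦ φ Z
  have hgc : Continuous fun φ : K => φ Z :=
    (WeakDual.eval_continuous Z).comp (continuous_subtype_val)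
  -- its range is the closed ball
  have hrange : ∀ φ : K, φ Z ∈ closedBall (0:ℂ) 1 := by
    intro φ
    rw [← hspec]
    exact AlgHom.apply_mem_spectrum φ Z
  -- injectivity
  have hginj : Function.Injective fun φ : K => φ Z := by
    intro φ ψ h
    have hcont1 : Continuous (φ : T → ℂ) := map_continuous _
    have hcont2 : Continuous (ψ : T → ℂ) := map_continuous _
    have : (φ : T → ℂ) = (ψ : T → ℂ) := by
      refine Continuous.ext_on hdense hcont1 hcont2 ?_
      rintro _ ⟨p, rfl⟩
      have h1 : φ (Polynomial.aeval Z p) = Polynomial.aeval (φ Z) p :=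
        (Polynomial.aeval_algHom_apply (WeakDual.CharacterSpace.equivAlgHom φ) Z p).symm
      have h2 : ψ (Polynomial.aeval Z p) = Polynomial.aeval (ψ Z) p :=
        (Polynomial.aeval_algHom_apply (WeakDual.CharacterSpace.equivAlgHom ψ) Z p).symm
      simp only [h1, h2, h]
    ext x
    exact congrFun this x
  -- surjectivity onto the closed ball
  have hgsurj : ∀ w ∈ closedBall (0:ℂ) 1, ∃ φ : K, φ Z = w := by
    intro w hw
    rw [← hspec] at hw
    exact WeakDual.CharacterSpace.mem_spectrum_iff_exists.mp hw
  -- the bundled map to the closed ball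
  let g : K → closedBall (0:ℂ) 1 := fun φ => ⟨φ Z, hrange φ⟩
  have hgbij : Function.Bijective g := by
    constructor
    · intro φ ψ h
      exact hginj (congrArg Subtype.val h)
    · rintro ⟨w, hw⟩
      obtain ⟨φ, hφ⟩ := hgsurj w hw
      exact ⟨φ, Subtype.ext hφ⟩
  have hgcont : Continuous g := Continuous.subtype_mk hgc _
  let e : K ≃ₜ closedBall (0:ℂ) 1 :=
    Continuous.homeoOfEquivCompactToT2 (f := Equiv.ofBijective g hgbij) hgcont
  -- the extension
  refine ⟨fun a w => if h : w ∈ closedBall (0:ℂ) 1 then (e.symm ⟨w, h⟩) a else 0,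
    ?_, ?_, ?_, ?_⟩
  · -- continuity on the closed ball
    intro a
    rw [continuousOn_iff_continuous_restrict]
    have : (closedBall (0:ℂ) 1).domRestrict
        (fun w => if h : w ∈ closedBall (0:ℂ) 1 then (e.symm ⟨w, h⟩) a else 0)
        = fun x : closedBall (0:ℂ) 1 => (e.symm x) a := by
      funext x
      simp only [Set.domRestrict, dif_pos x.2]
    rw [this]
    exact ((WeakDual.eval_continuous a).comp
      (continuous_subtype_val)).comp e.symm.continuous
  · -- agreement with ι on the open ball
    intro a z hz
    have hz' : z ∈ closedBall (0:ℂ) 1 := ball_subset_closedBall hz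
    show (if h : z ∈ closedBall (0:ℂ) 1 then (e.symm ⟨z, h⟩) a else 0) = ι a z
    rw [dif_pos hz']
    -- evaluation at z is a character
    let ψ : T →ₐ[ℂ] ℂ := (Pi.evalAlgHom ℂ (fun _ => ℂ) z).comp ι
    let χ : K := WeakDual.CharacterSpace.equivAlgHom.symm ψ
    have hχ : ∀ b : T, χ b = ι b z := fun b =>
      congrFun (WeakDual.CharacterSpace.equivAlgHom_symm_coe ψ) b
    have hχZ : χ Z = z := by rw [hχ Z]; exact hZ z hz
    have : e χ = ⟨z, hz'⟩ := Subtype.ext hχZ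
    have he : e.symm ⟨z, hz'⟩ = χ := by rw [← this, Homeomorph.symm_apply_apply]
    rw [he, hχ a]
  · -- continuity of evaluation
    intro w hw
    have : (fun a : T => if h : w ∈ closedBall (0:ℂ) 1 then (e.symm ⟨w, h⟩) a else 0)
        = fun a : T => (e.symm ⟨w, hw⟩) a := by
      funext a; rw [dif_pos hw]
    rw [this]
    exact map_continuous _
  · -- the spectrum
    intro a
    ext x
    rw [WeakDual.CharacterSpace.mem_spectrum_iff_exists]
    constructor
    · rintro ⟨φ, rfl⟩
      refine ⟨φ Z, hrange φ, ?_⟩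
      show (if h : φ Z ∈ closedBall (0:ℂ) 1 then (e.symm ⟨φ Z, h⟩) a else 0) = φ a
      rw [dif_pos (hrange φ)]
      congr 1
      exact e.symm_apply_apply φ
    · rintro ⟨w, hw, rfl⟩
      show ∃ f : K, f a = (if h : w ∈ closedBall (0:ℂ) 1 then (e.symm ⟨w, h⟩) a else 0)
      rw [dif_pos hw]
      exact ⟨e.symm ⟨w, hw⟩, rfl⟩
end
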